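/- arXiv:math/0608395 — 2 statements merged into one kernel-verified Lean document; each statement's English description precedes it below -/
import Mathlib

section
/- Let V be a vector space. The composite N ∘ π, where π : ⊕_{i≥1} V^{⊗i} → ⊕_{i≥1} (V^{⊗i})_{Z_i} is the projection to cyclic coinvariants and N = Σ_i N_i is the norm operator (N_i = 1 + z_i + ... + z_i^{i−1} for the cyclic generator z_i of Z_i acting on V^{⊗i}), identifies the differential d : DR⁰(V) → DR¹(V): explicitly, under the isomorphism Θ : V⊗T(V) ≅ DR¹(V), for any x₁⊗...⊗x_k ∈ V^{⊗k} representing a class in DR⁰(V), Θ⁻¹(d[x₁...x_k]) = Σ_{i=1}^{k} (with appropriate Koszul signs) the cyclic rotation z^{i−1}·(x₁⊗...⊗x_k). -/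
/- STATEMENT 4.  Under the isomorphism Θ : V⊗T(V) ≅ DR¹(V), the differential
d : DR⁰(V) → DR¹(V) is identified with the norm map N composed with the
projection to cyclic coinvariants: for a word x₁⋯x_k representing a class of
DR⁰(V), one has  Θ⁻¹(d[x₁⋯x_k]) = Σ_{i=1}^{k} z^{i-1}·(x₁⊗⋯⊗x_k)
(the sum of the cyclic rotations x_i ⊗ (x_{i+1}⋯x_k x_1⋯x_{i-1})).
The model is the one of Statement 2 (Ω¹ = T(V)⊗(V⊗T(V)), DR¹ its commutator
quotient); d[a] is represented by 1 ⊗ ν(a), where ν : T(V) → V⊗T(V) is the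
canonical splitting (ν(1) = 0, ν(x·w) = x⊗w for x ∈ V). -/

open TensorProduct

noncomputable section

variable (V : Type) [AddCommGroup V] [Module ℂ V]

abbrev TA := TensorAlgebra ℂ V

abbrev Om := TA V ⊗[ℂ] (V ⊗[ℂ] TA V)

def mu : V ⊗[ℂ] TA V →ₗ[ℂ] TA V :=
  TensorProduct.lift ((LinearMap.mul ℂ (TA V)).comp (TensorAlgebra.ι ℂ))

def lAct2 (a : TA V) : Om V →ₗ[ℂ] Om V :=
  TensorProduct.map (LinearMap.mulLeft ℂ a) LinearMap.id

def rAct2 (c : ℂ) (α : V ⊗[ℂ] TA V) : Om V →ₗ[ℂ] Om V :=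
  c • LinearMap.id
  + TensorProduct.map LinearMap.id
      (TensorProduct.map LinearMap.id (LinearMap.mulRight ℂ (mu V α)))
  - ((TensorProduct.mk ℂ (TA V) (V ⊗[ℂ] TA V)).flip α).comp
      ((LinearMap.mul' ℂ (TA V)).comp (TensorProduct.map LinearMap.id (mu V)))

def commSub : Submodule ℂ (Om V) :=
  Submodule.span ℂ
    {u | ∃ (c : ℂ) (α : V ⊗[ℂ] TA V) (ω : Om V),
      u = lAct2 V (algebraMap ℂ (TA V) c + mu V α) ω - rAct2 V c α ω}

abbrev DR1 := Om V ⧸ commSub V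

def Theta : V ⊗[ℂ] TA V →ₗ[ℂ] DR1 V :=
  (commSub V).mkQ.comp
    ((TensorProduct.comm ℂ (V ⊗[ℂ] TA V) (TA V)).toLinearMap.comp
      (TensorProduct.map ((TensorProduct.mk ℂ V (TA V)).flip (1 : TA V)) LinearMap.id))

/-- The product in T(V) of a list of elements of V. -/
def prodW (ℓ : List V) : TA V := (ℓ.map (TensorAlgebra.ι ℂ)).prod

/-!
In `DR¹` the class of `a ⊗ (x ⊗ w)` is the 1-form `a · dx · w`, and commuting the 1-form
`y ⊗ 1 = dy` past `b ⊗ (x ⊗ w)` gives `[y b ⊗ (x ⊗ w)] = [b ⊗ (x ⊗ w y)] - [b x w ⊗ (y ⊗ 1)]`.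
Moving the letters of `x₂⋯x_k` one at a time from the left coefficient of `x₁ ⊗ 1` to its right
thus turns `Θ(x₁ ⊗ x₂⋯x_k)` into `d[x₁⋯x_k] = [1 ⊗ (x₁ ⊗ x₂⋯x_k)]`, each move emitting the
`Θ`-image of one further cyclic rotation of the word.
-/

lemma List.take_length_sub_one_rotate_succ {α : Type*} (l : List α) {m : ℕ}
    (hm : m < l.length) :
    (l.rotate (m + 1)).take (l.length - 1) = l.drop (m + 1) ++ l.take m := by
  rw [List.rotate_eq_drop_append_take hm, List.take_append,
    List.take_of_length_le (by simp; omega), List.take_take, List.length_drop]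
  congr 2
  omega

lemma Theta_tmul (x : V) (w : TA V) :
    Theta V (x ⊗ₜ[ℂ] w) = (commSub V).mkQ (w ⊗ₜ[ℂ] (x ⊗ₜ[ℂ] (1 : TA V))) := by
  simp [Theta]

lemma mkQ_ι_mul_tmul (y x : V) (b w : TA V) :
    (commSub V).mkQ ((TensorAlgebra.ι ℂ y * b) ⊗ₜ[ℂ] (x ⊗ₜ[ℂ] w))
      = (commSub V).mkQ (b ⊗ₜ[ℂ] (x ⊗ₜ[ℂ] (w * TensorAlgebra.ι ℂ y)))
        - (commSub V).mkQ ((b * (TensorAlgebra.ι ℂ x * w)) ⊗ₜ[ℂ] (y ⊗ₜ[ℂ] (1 : TA V))) := by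
  have hmem : lAct2 V (algebraMap ℂ (TA V) 0 + mu V (y ⊗ₜ[ℂ] 1)) (b ⊗ₜ[ℂ] (x ⊗ₜ[ℂ] w))
      - rAct2 V 0 (y ⊗ₜ[ℂ] 1) (b ⊗ₜ[ℂ] (x ⊗ₜ[ℂ] w)) ∈ commSub V :=
    Submodule.subset_span ⟨0, y ⊗ₜ[ℂ] 1, b ⊗ₜ[ℂ] (x ⊗ₜ[ℂ] w), rfl⟩
  simp only [lAct2, rAct2, mu, map_zero, zero_add, zero_smul, LinearMap.sub_apply,
    LinearMap.comp_apply, map_tmul, lift.tmul,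
    LinearMap.mulLeft_apply, LinearMap.mulRight_apply, LinearMap.mul_apply', LinearMap.id_apply,
    LinearMap.mul'_apply, LinearMap.flip_apply, mk_apply, mul_one] at hmem
  rw [← map_sub, ← sub_eq_zero, ← map_sub, Submodule.mkQ_apply, Submodule.Quotient.mk_eq_zero]
  exact hmem

lemma prodW_nil : prodW V [] = 1 := rfl

lemma prodW_cons (x : V) (ℓ : List V) :
    prodW V (x :: ℓ) = TensorAlgebra.ι ℂ x * prodW V ℓ := by
  simp [prodW]

lemma prodW_append (ℓ ℓ' : List V) :
    prodW V (ℓ ++ ℓ') = prodW V ℓ * prodW V ℓ' := by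
  simp [prodW]

lemma mkQ_prodW_tmul (x : V) (q : TA V) {n : ℕ} (ys : Fin n → V) :
    (commSub V).mkQ (prodW V (List.ofFn ys) ⊗ₜ[ℂ] (x ⊗ₜ[ℂ] q))
      = (commSub V).mkQ ((1 : TA V) ⊗ₜ[ℂ] (x ⊗ₜ[ℂ] (q * prodW V (List.ofFn ys))))
        - ∑ i : Fin n, (commSub V).mkQ
            ((prodW V ((List.ofFn ys).drop (i + 1)) * (TensorAlgebra.ι ℂ x * q)
                * prodW V ((List.ofFn ys).take i)) ⊗ₜ[ℂ] (ys i ⊗ₜ[ℂ] (1 : TA V))) := by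
  induction n generalizing q with
  | zero => simp [prodW_nil]
  | succ n ih =>
    rw [List.ofFn_succ, prodW_cons, mkQ_ι_mul_tmul, ih, Fin.sum_univ_succ]
    simp only [prodW_cons, prodW_nil, Fin.val_zero, Fin.val_succ, List.drop_succ_cons,
      List.drop_zero, List.take_zero, List.take_succ_cons, mul_one, mul_assoc]
    abel

/-- Lemma 2.11:  Θ(N·(x₁⊗⋯⊗x_k)) = d[x₁⋯x_k], i.e. the differential
DR⁰ → DR¹ is the norm map under the identification Θ. -/
theorem statement_4 (ν : TA V →ₗ[ℂ] V ⊗[ℂ] TA V)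
    (hν1 : ν 1 = 0)
    (hν : ∀ (x : V) (w : TA V), ν (TensorAlgebra.ι ℂ x * w) = x ⊗ₜ[ℂ] w) :
    ∀ (k : ℕ) (xs : Fin k → V),
      Theta V (∑ i : Fin k,
          (xs i) ⊗ₜ[ℂ] prodW V (((List.ofFn xs).rotate (i.val + 1)).take (k - 1)))
        = (commSub V).mkQ ((1 : TA V) ⊗ₜ[ℂ] ν (prodW V (List.ofFn xs))) := by
  intro k xs
  have hrotate (i : Fin k) : ((List.ofFn xs).rotate (i.val + 1)).take (k - 1)
      = (List.ofFn xs).drop (i.val + 1) ++ (List.ofFn xs).take i.val := by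
    simpa using (List.ofFn xs).take_length_sub_one_rotate_succ (m := i.val) (by simp)
  simp only [hrotate, prodW_append, map_sum, Theta_tmul]
  cases k with
  | zero => simp [prodW_nil, hν1]
  | succ k =>
    rw [Fin.sum_univ_succ, List.ofFn_succ, prodW_cons, hν]
    simp only [Fin.val_zero, Fin.val_succ, List.drop_succ_cons, List.drop_zero, List.take_zero,
      List.take_succ_cons, prodW_cons, prodW_nil, mul_one]
    rw [mkQ_prodW_tmul, mul_one, one_mul]
    simp only [mul_assoc]
    abel

end
end

section
/- The bracket {a,b} on cyclic words given explicitly by {a₁...a_k, b₁...b_l} = Σ_{i=1}^{k} Σ_{j=1}^{l} (−1)^p ⟨a_i,b_j⟩ (z_{k−1}^{i−1}·a₁...â_i...a_k)(z_{l−1}^{j−1}·b₁...b̂_j...b_l), where p = |a_i|(|a_{i+1}|+...+|a_k|+|b₁|+...+|b_{j−1}|), satisfies the super Jacobi identity: {{a,b},c} = {a,{b,c}} − (−1)^{|a||b|}{b,{a,c}}. -/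
/- STATEMENT 6.  The bracket on cyclic words given by the explicit contraction
formula of Lemma 2.23 satisfies the super Jacobi identity:
{{a,b},c} = {a,{b,c}} − (−1)^{|a||b|} {b,{a,c}}.  Cyclic words are modelled as
the quotient of the free vector space on words in the standard homogeneous
basis of V = ℂ^{2n|m} by the signed cyclic-rotation relations; the identity is
stated on word representatives (bracketF is the bilinear extension of the
bracket to formal sums of words), the equality holding in the quotient. -/

noncomputable section

/-- The standard homogeneous basis of V = ℂ^{2n|m}: p₁,…,pₙ (= inl (inl i)),
q₁,…,qₙ (= inl (inr i)) even, and x₁,…,x_m (= inr j) odd. -/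
abbrev BB (n m : ℕ) : Type := (Fin n ⊕ Fin n) ⊕ Fin m

/-- Parity of a basis element. -/
def par {n m : ℕ} : BB n m → ℕ
  | .inl _ => 0
  | .inr _ => 1

/-- Parity of a word. -/
def pL {n m : ℕ} (ℓ : List (BB n m)) : ℕ := (ℓ.map par).sum

/-- The canonical even symplectic form ⟨−,−⟩ on ℂ^{2n|m}:
⟨pᵢ,qⱼ⟩ = δᵢⱼ = −⟨qⱼ,pᵢ⟩, ⟨xᵢ,xⱼ⟩ = δᵢⱼ, all other pairings zero. -/
def bform {n m : ℕ} : BB n m → BB n m → ℂ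
  | .inl (.inl i), .inl (.inr j) => if i = j then 1 else 0
  | .inl (.inr i), .inl (.inl j) => if i = j then -1 else 0
  | .inr i, .inr j => if i = j then 1 else 0
  | _, _ => 0

/-- The underlying vector space of the tensor algebra T(V):  the free vector
space on words in the basis. -/
abbrev FW (n m : ℕ) : Type := List (BB n m) →₀ ℂ

/-- The signed cyclic-rotation relations: the quotient FW/cycRel is the space
of cyclic words ⊕ᵢ (V^{⊗i})_{Zᵢ} (with Koszul signs). -/
def cycRel (n m : ℕ) : Submodule ℂ (FW n m) :=
  Submodule.span ℂ
    {u | ∃ (a : BB n m) (t : List (BB n m)),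
      u = Finsupp.single (a :: t) (1 : ℂ)
          - ((-1 : ℂ) ^ (par a * pL t)) • Finsupp.single (t ++ [a]) 1}

/-- The Koszul sign of the rotation z^{i}·(word with its i-th letter deleted). -/
def rdC {n m : ℕ} (ℓ : List (BB n m)) (i : ℕ) : ℂ :=
  (-1 : ℂ) ^ (pL (ℓ.take i) * pL (ℓ.drop (i + 1)))

/-- The word z^{i}·(ℓ with its i-th letter deleted). -/
def rdW {n m : ℕ} (ℓ : List (BB n m)) (i : ℕ) : List (BB n m) :=
  ℓ.drop (i + 1) ++ ℓ.take i

/-- The explicit bracket of Lemma 2.23 on cyclic words: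
{a₁⋯a_k, b₁⋯b_l} = Σᵢⱼ (−1)^p ⟨aᵢ,bⱼ⟩ (z^{i−1}·a₁⋯âᵢ⋯a_k)(z^{j−1}·b₁⋯b̂ⱼ⋯b_l),
p = |aᵢ|(|a_{i+1}|+⋯+|a_k|+|b₁|+⋯+|b_{j−1}|). -/
def bracketWord {n m : ℕ} (a b : List (BB n m)) : FW n m :=
  ∑ i : Fin a.length, ∑ j : Fin b.length,
    (((-1 : ℂ) ^ (par (a.get i) * (pL (a.drop (i.val + 1)) + pL (b.take j.val))))
        * bform (a.get i) (b.get j) * rdC a i.val * rdC b j.val)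
      • Finsupp.single (rdW a i.val ++ rdW b j.val) (1 : ℂ)

/-- Bilinear extension of the bracket to formal linear combinations of words. -/
def bracketF {n m : ℕ} (u v : FW n m) : FW n m :=
  u.sum fun a ca => v.sum fun b cb => (ca * cb) • bracketWord a b

namespace Jac

variable {n m : ℕ}

@[simp] lemma pL_nil : pL ([] : List (BB n m)) = 0 := rfl
@[simp] lemma pL_cons (x : BB n m) (t : List (BB n m)) : pL (x :: t) = par x + pL t := by
  simp [pL]
@[simp] lemma pL_append (s t : List (BB n m)) : pL (s ++ t) = pL s + pL t := by
  simp [pL]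
@[simp] lemma pL_single (x : BB n m) : pL [x] = par x := by simp

lemma sg_eq {a b : ℕ} (h : (a : ZMod 2) = (b : ZMod 2)) : (-1 : ℂ)^a = (-1 : ℂ)^b := by
  have h2 : a % 2 = b % 2 := by
    have := (ZMod.natCast_eq_natCast_iff' a b 2).mp h
    simpa using this
  rw [← Nat.div_add_mod a 2, ← Nat.div_add_mod b 2, pow_add, pow_add, pow_mul, pow_mul, h2]
  norm_num

lemma bform_symm (x y : BB n m) : bform y x = (-1 : ℂ)^(par x * par y + 1) * bform x y := by
  rcases x with (i|i)|i <;> rcases y with (j|j)|j <;>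
    simp [bform, par, eq_comm] <;> split <;> ring

lemma bform_par {x y : BB n m} (h : bform x y ≠ 0) : par x = par y := by
  rcases x with (i|i)|i <;> rcases y with (j|j)|j <;> simp_all [bform, par]

/-- rotation relation, single-step -/
lemma rot1 (x : BB n m) (t : List (BB n m)) :
    (cycRel n m).mkQ (Finsupp.single (x :: t) 1)
      = ((-1 : ℂ)^(par x * pL t)) • (cycRel n m).mkQ (Finsupp.single (t ++ [x]) 1) := by
  have hmem : (Finsupp.single (x :: t) (1:ℂ)
      - ((-1 : ℂ)^(par x * pL t)) • Finsupp.single (t ++ [x]) 1) ∈ cycRel n m :=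
    Submodule.subset_span ⟨x, t, rfl⟩
  have h0 : (cycRel n m).mkQ (Finsupp.single (x :: t) (1:ℂ)
      - ((-1 : ℂ)^(par x * pL t)) • Finsupp.single (t ++ [x]) 1) = 0 :=
    (Submodule.Quotient.mk_eq_zero _).mpr hmem
  rw [map_sub, map_smul, sub_eq_zero] at h0
  exact h0

/-- general rotation -/
lemma rot (s t : List (BB n m)) :
    (cycRel n m).mkQ (Finsupp.single (s ++ t) 1)
      = ((-1 : ℂ)^(pL s * pL t)) • (cycRel n m).mkQ (Finsupp.single (t ++ s) 1) := by
  induction s generalizing t with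
  | nil => simp
  | cons x s ih =>
      rw [List.cons_append, rot1, show s ++ t ++ [x] = s ++ (t ++ [x]) from List.append_assoc .., ih (t ++ [x])]
      rw [smul_smul, List.append_assoc]
      congr 1
      rw [← pow_add]
      apply sg_eq
      simp only [pL_append, pL_cons, pL_nil, pL_single]
      push_cast
      generalize (par x : ZMod 2) = X
      generalize (pL s : ZMod 2) = S
      generalize (pL t : ZMod 2) = T
      revert X S T
      decide

end Jac

namespace Jac2
open Jac

variable {n m : ℕ}

def nth (ℓ : List (BB n m)) (i : ℕ) : List (BB n m) := (ℓ.drop i).take 1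

lemma nth_eq {ℓ : List (BB n m)} {i : ℕ} (h : i < ℓ.length) : nth ℓ i = [ℓ[i]] := by
  unfold nth
  rw [List.drop_eq_getElem_cons h]
  rfl

@[simp] lemma nth_cons_succ (x : BB n m) (w : List (BB n m)) (p : ℕ) :
    nth (x :: w) (p + 1) = nth w p := by simp [nth]

@[simp] lemma nth_cons_zero (x : BB n m) (w : List (BB n m)) :
    nth (x :: w) 0 = [x] := by simp [nth]

def bformL : List (BB n m) → List (BB n m) → ℂ
  | [x], [y] => bform x y
  | _, _ => 0

@[simp] lemma bformL_single (x y : BB n m) : bformL [x] [y] = bform x y := rfl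

def cfL (T x D T' y D' : List (BB n m)) : ℂ :=
  (-1 : ℂ)^(pL x * (pL D + pL T')) * bformL x y
    * (-1 : ℂ)^(pL T * pL D) * (-1 : ℂ)^(pL T' * pL D')

lemma BW_eq (a b : List (BB n m)) : bracketWord a b
    = ∑ i : Fin a.length, ∑ j : Fin b.length,
      cfL (a.take ↑i) (nth a ↑i) (a.drop (↑i+1)) (b.take ↑j) (nth b ↑j) (b.drop (↑j+1)) •
        Finsupp.single ((a.drop (↑i+1) ++ a.take ↑i) ++ (b.drop (↑j+1) ++ b.take ↑j)) 1 := by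
  unfold bracketWord rdC rdW
  refine Finset.sum_congr rfl fun i _ => Finset.sum_congr rfl fun j _ => ?_
  rw [cfL, nth_eq i.isLt, nth_eq j.isLt]
  simp only [List.get_eq_getElem, pL_single, bformL_single]

def tmF (c T x D : List (BB n m)) : FW n m :=
  ∑ k : Fin c.length, cfL T x D (c.take ↑k) (nth c ↑k) (c.drop (↑k+1)) •
    Finsupp.single ((D ++ T) ++ (c.drop (↑k+1) ++ c.take ↑k)) (1:ℂ)

lemma BW_fst (a c : List (BB n m)) :
    bracketWord a c = ∑ i : Fin a.length, tmF c (a.take ↑i) (nth a ↑i) (a.drop (↑i+1)) :=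
  BW_eq a c

def tmS (a T y D : List (BB n m)) : FW n m :=
  ∑ i : Fin a.length, cfL (a.take ↑i) (nth a ↑i) (a.drop (↑i+1)) T y D •
    Finsupp.single ((a.drop (↑i+1) ++ a.take ↑i) ++ (D ++ T)) (1:ℂ)

lemma BW_snd (a b : List (BB n m)) :
    bracketWord a b = ∑ j : Fin b.length, tmS a (b.take ↑j) (nth b ↑j) (b.drop (↑j+1)) := by
  rw [BW_eq]; exact Finset.sum_comm

lemma split_sum {M : Type*} [AddCommMonoid M] (u v : List (BB n m))
    (F : List (BB n m) → List (BB n m) → List (BB n m) → M) :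
    (∑ p : Fin (u ++ v).length, F ((u ++ v).take ↑p) (nth (u ++ v) ↑p) ((u ++ v).drop (↑p+1)))
    = (∑ p : Fin u.length, F (u.take ↑p) (nth u ↑p) (u.drop (↑p+1) ++ v))
      + ∑ p : Fin v.length, F (u ++ v.take ↑p) (nth v ↑p) (v.drop (↑p+1)) := by
  induction u generalizing F with
  | nil => simp
  | cons x u ih =>
      rw [List.cons_append]
      rw [show (x :: (u ++ v)).length = (u ++ v).length + 1 from rfl,
          show (x :: u).length = u.length + 1 from rfl,
          Fin.sum_univ_succ, Fin.sum_univ_succ]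
      simp only [Fin.val_zero, Fin.val_succ, List.take_zero, List.take_succ_cons,
        List.drop_succ_cons, nth_cons_zero, nth_cons_succ, List.nil_append, List.take_nil,
        List.drop_zero]
      rw [ih (fun T y D => F (x :: T) y D), add_assoc]
      simp only [List.cons_append]

lemma split4 {M : Type*} [AddCommMonoid M] (s1 s2 s3 s4 : List (BB n m))
    (F : List (BB n m) → List (BB n m) → List (BB n m) → M) :
    (∑ p : Fin (s1 ++ (s2 ++ (s3 ++ s4))).length,
        F ((s1 ++ (s2 ++ (s3 ++ s4))).take ↑p) (nth (s1 ++ (s2 ++ (s3 ++ s4))) ↑p)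
          ((s1 ++ (s2 ++ (s3 ++ s4))).drop (↑p+1)))
    = (∑ p : Fin s1.length, F (s1.take ↑p) (nth s1 ↑p) (s1.drop (↑p+1) ++ (s2 ++ (s3 ++ s4))))
      + ((∑ p : Fin s2.length, F (s1 ++ s2.take ↑p) (nth s2 ↑p) (s2.drop (↑p+1) ++ (s3 ++ s4)))
      + ((∑ p : Fin s3.length, F (s1 ++ (s2 ++ s3.take ↑p)) (nth s3 ↑p) (s3.drop (↑p+1) ++ s4))
      + (∑ p : Fin s4.length, F (s1 ++ (s2 ++ (s3 ++ s4.take ↑p))) (nth s4 ↑p)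
          (s4.drop (↑p+1))))) := by
  rw [split_sum s1 (s2 ++ (s3 ++ s4)) F]
  congr 1
  refine (split_sum s2 (s3 ++ s4) (fun T y D => F (s1 ++ T) y D)).trans ?_
  congr 1
  exact split_sum s3 s4 (fun T y D => F (s1 ++ (s2 ++ T)) y D)

lemma fin2 {M : Type*} [AddCommMonoid M] (L : ℕ) (B : ℕ → ℕ) (f : ℕ → ℕ → M) :
    (∑ i : Fin L, ∑ p : Fin (B ↑i), f ↑i ↑p)
      = ∑ i ∈ Finset.range L, ∑ p ∈ Finset.range (B i), f i p := by
  rw [← Fin.sum_univ_eq_sum_range (fun i => ∑ p ∈ Finset.range (B i), f i p) L]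
  exact Finset.sum_congr rfl fun i _ => Fin.sum_univ_eq_sum_range (f ↑i) (B ↑i)

lemma tri {M : Type*} [AddCommMonoid M] (L : ℕ) (B C : ℕ → ℕ)
    (hB : ∀ i, i < L → B i = L - (i+1)) (hC : ∀ i, i < L → C i = i)
    (f g : ℕ → ℕ → M)
    (h : ∀ i p, i < L → i + 1 + p < L → f i p = g (i + 1 + p) i) :
    (∑ i : Fin L, ∑ p : Fin (B ↑i), f ↑i ↑p) = ∑ i : Fin L, ∑ q : Fin (C ↑i), g ↑i ↑q := by
  rw [fin2 L B f, fin2 L C g, Finset.sum_sigma', Finset.sum_sigma']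
  refine Finset.sum_nbij' (fun x => ⟨x.1 + 1 + x.2, x.1⟩) (fun y => ⟨y.2, y.1 - y.2 - 1⟩)
    ?_ ?_ ?_ ?_ ?_
  · rintro ⟨i, p⟩ hm
    simp only [Finset.mem_sigma, Finset.mem_range] at hm ⊢
    obtain ⟨h1, h2⟩ := hm
    rw [hB i h1] at h2
    refine ⟨by omega, ?_⟩
    rw [hC (i+1+p) (by omega)]
    omega
  · rintro ⟨i, q⟩ hm
    simp only [Finset.mem_sigma, Finset.mem_range] at hm ⊢
    obtain ⟨h1, h2⟩ := hm
    rw [hC i h1] at h2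
    refine ⟨by omega, ?_⟩
    rw [hB q (by omega)]
    omega
  · rintro ⟨i, p⟩ hm
    simp only [Finset.mem_sigma, Finset.mem_range] at hm
    show (⟨i, i + 1 + p - i - 1⟩ : (_ : ℕ) × ℕ) = ⟨i, p⟩
    congr 1
    omega
  · rintro ⟨i, q⟩ hm
    simp only [Finset.mem_sigma, Finset.mem_range] at hm
    obtain ⟨h1, h2⟩ := hm
    rw [hC i h1] at h2
    show (⟨q + 1 + (i - q - 1), q⟩ : (_ : ℕ) × ℕ) = ⟨i, q⟩
    congr 1
    omega
  · rintro ⟨i, p⟩ hm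
    simp only [Finset.mem_sigma, Finset.mem_range] at hm
    obtain ⟨h1, h2⟩ := hm
    rw [hB i h1] at h2
    exact h i p h1 (by omega)

lemma bf_right (u : FW n m) (c : List (BB n m)) :
    bracketF u (Finsupp.single c 1) = u.sum fun w cw => cw • bracketWord w c := by
  unfold bracketF
  refine Finsupp.sum_congr fun w _ => ?_
  rw [Finsupp.sum_single_index (by simp), mul_one]

lemma bf_left (a : List (BB n m)) (v : FW n m) :
    bracketF (Finsupp.single a 1) v = v.sum fun w cw => cw • bracketWord a w := by
  unfold bracketF
  rw [Finsupp.sum_single_index (by simp [Finsupp.sum])]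
  refine Finsupp.sum_congr fun w _ => ?_
  rw [one_mul]

lemma sum_to_linear (c : List (BB n m)) (u : FW n m) :
    (u.sum fun w cw => cw • bracketWord w c)
      = Finsupp.lsum ℂ (fun w => LinearMap.toSpanSingleton ℂ (FW n m) (bracketWord w c)) u := by
  rw [Finsupp.lsum_apply]
  rfl

lemma sum_to_linear' (a : List (BB n m)) (v : FW n m) :
    (v.sum fun w cw => cw • bracketWord a w)
      = Finsupp.lsum ℂ (fun w => LinearMap.toSpanSingleton ℂ (FW n m) (bracketWord a w)) v := by
  rw [Finsupp.lsum_apply]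
  rfl

lemma bf_right_sum (a b c : List (BB n m)) :
    bracketF (bracketWord a b) (Finsupp.single c 1)
      = ∑ i : Fin a.length, ∑ j : Fin b.length,
          cfL (a.take ↑i) (nth a ↑i) (a.drop (↑i+1)) (b.take ↑j) (nth b ↑j) (b.drop (↑j+1)) •
            bracketWord ((a.drop (↑i+1) ++ a.take ↑i) ++ (b.drop (↑j+1) ++ b.take ↑j)) c := by
  rw [bf_right, sum_to_linear, BW_eq, map_sum]
  refine Finset.sum_congr rfl fun i _ => ?_
  rw [map_sum]
  refine Finset.sum_congr rfl fun j _ => ?_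
  rw [map_smul, Finsupp.lsum_single, LinearMap.toSpanSingleton_apply, one_smul]

lemma bf_left_sum (a b c : List (BB n m)) :
    bracketF (Finsupp.single a 1) (bracketWord b c)
      = ∑ j : Fin b.length, ∑ k : Fin c.length,
          cfL (b.take ↑j) (nth b ↑j) (b.drop (↑j+1)) (c.take ↑k) (nth c ↑k) (c.drop (↑k+1)) •
            bracketWord a ((b.drop (↑j+1) ++ b.take ↑j) ++ (c.drop (↑k+1) ++ c.take ↑k)) := by
  rw [bf_left, sum_to_linear', BW_eq, map_sum]
  refine Finset.sum_congr rfl fun j _ => ?_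
  rw [map_sum]
  refine Finset.sum_congr rfl fun k _ => ?_
  rw [map_smul, Finsupp.lsum_single, LinearMap.toSpanSingleton_apply, one_smul]

end Jac2


namespace Jac3
open Jac Jac2

variable {n m : ℕ}

@[simp] lemma sg_two (a : ℕ) : (-1 : ℂ)^(a*2) = 1 := by
  rw [mul_comm, pow_mul]; norm_num
@[simp] lemma sg_three (a : ℕ) : (-1 : ℂ)^(a*3) = (-1 : ℂ)^a := by
  rw [show a*3 = a + a*2 from by ring, pow_add, sg_two, mul_one]
@[simp] lemma sg_sq (a : ℕ) : (-1 : ℂ)^(a^2) = (-1 : ℂ)^a := by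
  have : Fact (Nat.Prime 2) := ⟨Nat.prime_two⟩
  exact Jac.sg_eq (by push_cast; exact ZMod.pow_card _)

lemma smul_rot (c1 c2 : ℂ) (s t w1 w2 : List (BB n m)) (h1 : w1 = s ++ t) (h2 : w2 = t ++ s)
    (hc : c1 * (-1 : ℂ)^(pL s * pL t) = c2) :
    c1 • (cycRel n m).mkQ (Finsupp.single w1 1) = c2 • (cycRel n m).mkQ (Finsupp.single w2 1) := by
  subst h1 h2
  rw [rot s t, smul_smul, hc]

set_option maxRecDepth 10000 in
/-- matching 𝒢3 = ℋ2 -/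
lemma M1 (P Q D E1 E2 F G EE : List (BB n m)) (x y u z : BB n m)
    (hEE : EE = E1 ++ ([u] ++ E2)) :
    (cfL P [x] Q D [y] EE * cfL (Q ++ (P ++ E1)) [u] (E2 ++ D) F [z] G) •
      (cycRel n m).mkQ (Finsupp.single (((E2 ++ D) ++ (Q ++ (P ++ E1))) ++ (G ++ F)) 1)
    = (cfL (D ++ ([y] ++ E1)) [u] E2 F [z] G * cfL P [x] Q (E2 ++ D) [y] (E1 ++ (G ++ F))) •
      (cycRel n m).mkQ (Finsupp.single ((Q ++ P) ++ ((E1 ++ (G ++ F)) ++ (E2 ++ D))) 1) := by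
  subst hEE
  apply smul_rot _ _ (E2 ++ D) (Q ++ (P ++ (E1 ++ (G ++ F))))
  · simp [List.append_assoc]
  · simp [List.append_assoc]
  unfold cfL
  simp only [bformL_single, pL_append, pL_single, pL_cons, pL_nil]
  rcases eq_or_ne (bform x y) 0 with h|h
  · rw [h]; ring
  rcases eq_or_ne (bform u z) 0 with h2|h2
  · rw [h2]; ring
  have pxy := bform_par h
  have puz := bform_par h2
  rw [pxy, puz]
  ring_nf
  simp only [sg_two, sg_three, sg_sq, one_mul, mul_one]
  try ring

set_option maxRecDepth 10000 in
/-- matching ℋ1 = 𝒢4 -/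
lemma M2 (P Q D E E2 F G EE : List (BB n m)) (x y u z : BB n m)
    (hEE : EE = E ++ ([y] ++ E2)) :
    (cfL D [u] EE F [z] G * cfL P [x] Q E [y] (E2 ++ (D ++ (G ++ F)))) •
      (cycRel n m).mkQ (Finsupp.single ((Q ++ P) ++ ((E2 ++ (D ++ (G ++ F))) ++ E)) 1)
    = (cfL P [x] Q (D ++ ([u] ++ E)) [y] E2 * cfL (Q ++ (P ++ (E2 ++ D))) [u] E F [z] G) •
      (cycRel n m).mkQ (Finsupp.single ((E ++ (Q ++ (P ++ (E2 ++ D)))) ++ (G ++ F)) 1) := by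
  subst hEE
  apply smul_rot _ _ (Q ++ (P ++ (E2 ++ (D ++ (G ++ F))))) E
  · simp [List.append_assoc]
  · simp [List.append_assoc]
  unfold cfL
  simp only [bformL_single, pL_append, pL_single, pL_cons, pL_nil]
  rcases eq_or_ne (bform x y) 0 with h|h
  · rw [h]; ring
  rcases eq_or_ne (bform u z) 0 with h2|h2
  · rw [h2]; ring
  have pxy := bform_par h
  have puz := bform_par h2
  rw [pxy, puz]
  ring_nf
  simp only [sg_two, sg_three, sg_sq, one_mul, mul_one]
  try ring

set_option maxRecDepth 10000 in
/-- matching 𝒢1 = -σ 𝒦2 -/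
lemma M3 (P Q2 D Eb E F G AA : List (BB n m)) (x y v z : BB n m)
    (hAA : AA = E ++ ([v] ++ Q2)) :
    (cfL P [x] AA D [y] Eb * cfL E [v] (Q2 ++ (P ++ (Eb ++ D))) F [z] G) •
      (cycRel n m).mkQ (Finsupp.single (((Q2 ++ (P ++ (Eb ++ D))) ++ E) ++ (G ++ F)) 1)
    = ((-1 : ℂ)^((pL P + par x + (pL E + par v + pL Q2)) * (pL D + par y + pL Eb) + 1) *
        (cfL (P ++ ([x] ++ E)) [v] Q2 F [z] G * cfL D [y] Eb (Q2 ++ P) [x] (E ++ (G ++ F)))) •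
      (cycRel n m).mkQ (Finsupp.single ((Eb ++ D) ++ ((E ++ (G ++ F)) ++ (Q2 ++ P))) 1) := by
  subst hAA
  apply smul_rot _ _ (Q2 ++ P) (Eb ++ (D ++ (E ++ (G ++ F))))
  · simp [List.append_assoc]
  · simp [List.append_assoc]
  unfold cfL
  simp only [bformL_single, pL_append, pL_single, pL_cons, pL_nil]
  rw [bform_symm x y]
  rcases eq_or_ne (bform x y) 0 with h|h
  · rw [h]; ring
  rcases eq_or_ne (bform v z) 0 with h2|h2
  · rw [h2]; ring
  have pxy := bform_par h
  have pvz := bform_par h2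
  rw [pxy, pvz]
  ring_nf
  simp only [sg_two, sg_three, sg_sq, one_mul, mul_one]
  try ring

set_option maxRecDepth 10000 in
/-- matching -σ 𝒦1 = 𝒢2 -/
lemma M4 (P Q2 D Eb E F G AA : List (BB n m)) (x y v z : BB n m)
    (hAA : AA = E ++ ([x] ++ Q2)) :
    ((-1 : ℂ)^((pL P + par v + (pL E + par x + pL Q2)) * (pL D + par y + pL Eb) + 1) *
        (cfL P [v] AA F [z] G * cfL D [y] Eb E [x] (Q2 ++ (P ++ (G ++ F))))) •
      (cycRel n m).mkQ (Finsupp.single ((Eb ++ D) ++ ((Q2 ++ (P ++ (G ++ F))) ++ E)) 1)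
    = (cfL (P ++ ([v] ++ E)) [x] Q2 D [y] Eb * cfL (Q2 ++ P) [v] (E ++ (Eb ++ D)) F [z] G) •
      (cycRel n m).mkQ (Finsupp.single (((E ++ (Eb ++ D)) ++ (Q2 ++ P)) ++ (G ++ F)) 1) := by
  subst hAA
  apply smul_rot _ _ (Eb ++ (D ++ (Q2 ++ (P ++ (G ++ F))))) E
  · simp [List.append_assoc]
  · simp [List.append_assoc]
  unfold cfL
  simp only [bformL_single, pL_append, pL_single, pL_cons, pL_nil]
  rw [bform_symm x y]
  rcases eq_or_ne (bform x y) 0 with h|h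
  · rw [h]; ring
  rcases eq_or_ne (bform v z) 0 with h2|h2
  · rw [h2]; ring
  have pxy := bform_par h
  have pvz := bform_par h2
  rw [pxy, pvz]
  ring_nf
  simp only [sg_two, sg_three, sg_sq, one_mul, mul_one]
  try ring

set_option maxRecDepth 10000 in
/-- matching ℋ3 = σ 𝒦4 -/
lemma M5 (P Q D Eb E F G2 CC : List (BB n m)) (x y w z : BB n m)
    (hCC : CC = E ++ ([w] ++ G2)) :
    (cfL D [y] Eb F [z] CC * cfL P [x] Q (Eb ++ (D ++ E)) [w] (G2 ++ F)) •
      (cycRel n m).mkQ (Finsupp.single ((Q ++ P) ++ ((G2 ++ F) ++ (Eb ++ (D ++ E)))) 1)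
    = ((-1 : ℂ)^((pL P + par x + pL Q) * (pL D + par y + pL Eb)) *
        (cfL P [x] Q (F ++ ([z] ++ E)) [w] G2 * cfL D [y] Eb (Q ++ (P ++ (G2 ++ F))) [z] E)) •
      (cycRel n m).mkQ (Finsupp.single ((Eb ++ D) ++ (E ++ (Q ++ (P ++ (G2 ++ F))))) 1) := by
  subst hCC
  apply smul_rot _ _ (Q ++ (P ++ (G2 ++ F))) (Eb ++ (D ++ E))
  · simp [List.append_assoc]
  · simp [List.append_assoc]
  unfold cfL
  simp only [bformL_single, pL_append, pL_single, pL_cons, pL_nil]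
  rcases eq_or_ne (bform y z) 0 with h|h
  · rw [h]; ring
  rcases eq_or_ne (bform x w) 0 with h2|h2
  · rw [h2]; ring
  have pyz := bform_par h
  have pxw := bform_par h2
  rw [pyz, pxw]
  ring_nf
  simp only [sg_two, sg_three, sg_sq, one_mul, mul_one]
  try ring

set_option maxRecDepth 10000 in
/-- matching σ 𝒦3 = ℋ4 -/
lemma M6 (P Q D Eb E F G2 CC : List (BB n m)) (x y w z : BB n m)
    (hCC : CC = E ++ ([z] ++ G2)) :
    ((-1 : ℂ)^((pL P + par x + pL Q) * (pL D + par y + pL Eb)) *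
        (cfL P [x] Q F [w] CC * cfL D [y] Eb (Q ++ (P ++ E)) [z] (G2 ++ F))) •
      (cycRel n m).mkQ (Finsupp.single ((Eb ++ D) ++ ((G2 ++ F) ++ (Q ++ (P ++ E)))) 1)
    = (cfL D [y] Eb (F ++ ([w] ++ E)) [z] G2 * cfL P [x] Q (Eb ++ (D ++ (G2 ++ F))) [w] E) •
      (cycRel n m).mkQ (Finsupp.single ((Q ++ P) ++ (E ++ (Eb ++ (D ++ (G2 ++ F))))) 1) := by
  subst hCC
  apply smul_rot _ _ (Eb ++ (D ++ (G2 ++ F))) (Q ++ (P ++ E))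
  · simp [List.append_assoc]
  · simp [List.append_assoc]
  unfold cfL
  simp only [bformL_single, pL_append, pL_single, pL_cons, pL_nil]
  rcases eq_or_ne (bform x w) 0 with h|h
  · rw [h]; ring
  rcases eq_or_ne (bform y z) 0 with h2|h2
  · rw [h2]; ring
  have pxw := bform_par h
  have pyz := bform_par h2
  rw [pxw, pyz]
  ring_nf
  simp only [sg_two, sg_three, sg_sq, one_mul, mul_one]
  try ring


end Jac3

namespace Jac4
open Jac Jac2 Jac3

variable {n m : ℕ}
def G1 (a b c : List (BB n m)) : FW n m ⧸ cycRel n m :=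
  ∑ i : Fin a.length, ∑ j : Fin b.length, ∑ p : Fin ((a.drop (↑i + 1)).length), ∑ k : Fin c.length,
    (cfL (a.take ↑i) (nth a ↑i) (a.drop (↑i + 1)) (b.take ↑j) (nth b ↑j) (b.drop (↑j + 1)) *
      cfL ((a.drop (↑i + 1)).take ↑p) (nth (a.drop (↑i + 1)) ↑p) ((a.drop (↑i + 1)).drop (↑p + 1) ++ (a.take ↑i ++ (b.drop (↑j + 1) ++ b.take ↑j))) (c.take ↑k) (nth c ↑k) (c.drop (↑k + 1))) •
      (cycRel n m).mkQ (Finsupp.single ((((a.drop (↑i + 1)).drop (↑p + 1) ++ (a.take ↑i ++ (b.drop (↑j + 1) ++ b.take ↑j))) ++ ((a.drop (↑i + 1)).take ↑p)) ++ (c.drop (↑k + 1) ++ c.take ↑k)) 1)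

def G2 (a b c : List (BB n m)) : FW n m ⧸ cycRel n m :=
  ∑ i : Fin a.length, ∑ j : Fin b.length, ∑ p : Fin ((a.take ↑i).length), ∑ k : Fin c.length,
    (cfL (a.take ↑i) (nth a ↑i) (a.drop (↑i + 1)) (b.take ↑j) (nth b ↑j) (b.drop (↑j + 1)) *
      cfL (a.drop (↑i + 1) ++ (a.take ↑i).take ↑p) (nth (a.take ↑i) ↑p) ((a.take ↑i).drop (↑p + 1) ++ (b.drop (↑j + 1) ++ b.take ↑j)) (c.take ↑k) (nth c ↑k) (c.drop (↑k + 1))) •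
      (cycRel n m).mkQ (Finsupp.single ((((a.take ↑i).drop (↑p + 1) ++ (b.drop (↑j + 1) ++ b.take ↑j)) ++ (a.drop (↑i + 1) ++ (a.take ↑i).take ↑p)) ++ (c.drop (↑k + 1) ++ c.take ↑k)) 1)

def G3 (a b c : List (BB n m)) : FW n m ⧸ cycRel n m :=
  ∑ i : Fin a.length, ∑ j : Fin b.length, ∑ p : Fin ((b.drop (↑j + 1)).length), ∑ k : Fin c.length,
    (cfL (a.take ↑i) (nth a ↑i) (a.drop (↑i + 1)) (b.take ↑j) (nth b ↑j) (b.drop (↑j + 1)) *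
      cfL (a.drop (↑i + 1) ++ (a.take ↑i ++ (b.drop (↑j + 1)).take ↑p)) (nth (b.drop (↑j + 1)) ↑p) ((b.drop (↑j + 1)).drop (↑p + 1) ++ b.take ↑j) (c.take ↑k) (nth c ↑k) (c.drop (↑k + 1))) •
      (cycRel n m).mkQ (Finsupp.single ((((b.drop (↑j + 1)).drop (↑p + 1) ++ b.take ↑j) ++ (a.drop (↑i + 1) ++ (a.take ↑i ++ (b.drop (↑j + 1)).take ↑p))) ++ (c.drop (↑k + 1) ++ c.take ↑k)) 1)

def G4 (a b c : List (BB n m)) : FW n m ⧸ cycRel n m :=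
  ∑ i : Fin a.length, ∑ j : Fin b.length, ∑ p : Fin ((b.take ↑j).length), ∑ k : Fin c.length,
    (cfL (a.take ↑i) (nth a ↑i) (a.drop (↑i + 1)) (b.take ↑j) (nth b ↑j) (b.drop (↑j + 1)) *
      cfL (a.drop (↑i + 1) ++ (a.take ↑i ++ (b.drop (↑j + 1) ++ (b.take ↑j).take ↑p))) (nth (b.take ↑j) ↑p) ((b.take ↑j).drop (↑p + 1)) (c.take ↑k) (nth c ↑k) (c.drop (↑k + 1))) •
      (cycRel n m).mkQ (Finsupp.single ((((b.take ↑j).drop (↑p + 1)) ++ (a.drop (↑i + 1) ++ (a.take ↑i ++ (b.drop (↑j + 1) ++ (b.take ↑j).take ↑p)))) ++ (c.drop (↑k + 1) ++ c.take ↑k)) 1)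

def H1 (a b c : List (BB n m)) : FW n m ⧸ cycRel n m :=
  ∑ j : Fin b.length, ∑ k : Fin c.length, ∑ q : Fin ((b.drop (↑j + 1)).length), ∑ i : Fin a.length,
    (cfL (b.take ↑j) (nth b ↑j) (b.drop (↑j + 1)) (c.take ↑k) (nth c ↑k) (c.drop (↑k + 1)) *
      cfL (a.take ↑i) (nth a ↑i) (a.drop (↑i + 1)) ((b.drop (↑j + 1)).take ↑q) (nth (b.drop (↑j + 1)) ↑q) ((b.drop (↑j + 1)).drop (↑q + 1) ++ (b.take ↑j ++ (c.drop (↑k + 1) ++ c.take ↑k)))) •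
      (cycRel n m).mkQ (Finsupp.single (((a.drop (↑i + 1)) ++ (a.take ↑i)) ++ (((b.drop (↑j + 1)).drop (↑q + 1) ++ (b.take ↑j ++ (c.drop (↑k + 1) ++ c.take ↑k))) ++ ((b.drop (↑j + 1)).take ↑q))) 1)

def H2 (a b c : List (BB n m)) : FW n m ⧸ cycRel n m :=
  ∑ j : Fin b.length, ∑ k : Fin c.length, ∑ q : Fin ((b.take ↑j).length), ∑ i : Fin a.length,
    (cfL (b.take ↑j) (nth b ↑j) (b.drop (↑j + 1)) (c.take ↑k) (nth c ↑k) (c.drop (↑k + 1)) *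
      cfL (a.take ↑i) (nth a ↑i) (a.drop (↑i + 1)) (b.drop (↑j + 1) ++ (b.take ↑j).take ↑q) (nth (b.take ↑j) ↑q) ((b.take ↑j).drop (↑q + 1) ++ (c.drop (↑k + 1) ++ c.take ↑k))) •
      (cycRel n m).mkQ (Finsupp.single (((a.drop (↑i + 1)) ++ (a.take ↑i)) ++ (((b.take ↑j).drop (↑q + 1) ++ (c.drop (↑k + 1) ++ c.take ↑k)) ++ (b.drop (↑j + 1) ++ (b.take ↑j).take ↑q))) 1)

def H3 (a b c : List (BB n m)) : FW n m ⧸ cycRel n m :=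
  ∑ j : Fin b.length, ∑ k : Fin c.length, ∑ q : Fin ((c.drop (↑k + 1)).length), ∑ i : Fin a.length,
    (cfL (b.take ↑j) (nth b ↑j) (b.drop (↑j + 1)) (c.take ↑k) (nth c ↑k) (c.drop (↑k + 1)) *
      cfL (a.take ↑i) (nth a ↑i) (a.drop (↑i + 1)) (b.drop (↑j + 1) ++ (b.take ↑j ++ (c.drop (↑k + 1)).take ↑q)) (nth (c.drop (↑k + 1)) ↑q) ((c.drop (↑k + 1)).drop (↑q + 1) ++ c.take ↑k)) •
      (cycRel n m).mkQ (Finsupp.single (((a.drop (↑i + 1)) ++ (a.take ↑i)) ++ (((c.drop (↑k + 1)).drop (↑q + 1) ++ c.take ↑k) ++ (b.drop (↑j + 1) ++ (b.take ↑j ++ (c.drop (↑k + 1)).take ↑q)))) 1)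

def H4 (a b c : List (BB n m)) : FW n m ⧸ cycRel n m :=
  ∑ j : Fin b.length, ∑ k : Fin c.length, ∑ q : Fin ((c.take ↑k).length), ∑ i : Fin a.length,
    (cfL (b.take ↑j) (nth b ↑j) (b.drop (↑j + 1)) (c.take ↑k) (nth c ↑k) (c.drop (↑k + 1)) *
      cfL (a.take ↑i) (nth a ↑i) (a.drop (↑i + 1)) (b.drop (↑j + 1) ++ (b.take ↑j ++ (c.drop (↑k + 1) ++ (c.take ↑k).take ↑q))) (nth (c.take ↑k) ↑q) ((c.take ↑k).drop (↑q + 1))) •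
      (cycRel n m).mkQ (Finsupp.single (((a.drop (↑i + 1)) ++ (a.take ↑i)) ++ (((c.take ↑k).drop (↑q + 1)) ++ (b.drop (↑j + 1) ++ (b.take ↑j ++ (c.drop (↑k + 1) ++ (c.take ↑k).take ↑q))))) 1)

def K1 (a b c : List (BB n m)) : FW n m ⧸ cycRel n m :=
  ∑ i : Fin a.length, ∑ k : Fin c.length, ∑ q : Fin ((a.drop (↑i + 1)).length), ∑ j : Fin b.length,
    (cfL (a.take ↑i) (nth a ↑i) (a.drop (↑i + 1)) (c.take ↑k) (nth c ↑k) (c.drop (↑k + 1)) *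
      cfL (b.take ↑j) (nth b ↑j) (b.drop (↑j + 1)) ((a.drop (↑i + 1)).take ↑q) (nth (a.drop (↑i + 1)) ↑q) ((a.drop (↑i + 1)).drop (↑q + 1) ++ (a.take ↑i ++ (c.drop (↑k + 1) ++ c.take ↑k)))) •
      (cycRel n m).mkQ (Finsupp.single (((b.drop (↑j + 1)) ++ (b.take ↑j)) ++ (((a.drop (↑i + 1)).drop (↑q + 1) ++ (a.take ↑i ++ (c.drop (↑k + 1) ++ c.take ↑k))) ++ ((a.drop (↑i + 1)).take ↑q))) 1)

def K2 (a b c : List (BB n m)) : FW n m ⧸ cycRel n m :=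
  ∑ i : Fin a.length, ∑ k : Fin c.length, ∑ q : Fin ((a.take ↑i).length), ∑ j : Fin b.length,
    (cfL (a.take ↑i) (nth a ↑i) (a.drop (↑i + 1)) (c.take ↑k) (nth c ↑k) (c.drop (↑k + 1)) *
      cfL (b.take ↑j) (nth b ↑j) (b.drop (↑j + 1)) (a.drop (↑i + 1) ++ (a.take ↑i).take ↑q) (nth (a.take ↑i) ↑q) ((a.take ↑i).drop (↑q + 1) ++ (c.drop (↑k + 1) ++ c.take ↑k))) •
      (cycRel n m).mkQ (Finsupp.single (((b.drop (↑j + 1)) ++ (b.take ↑j)) ++ (((a.take ↑i).drop (↑q + 1) ++ (c.drop (↑k + 1) ++ c.take ↑k)) ++ (a.drop (↑i + 1) ++ (a.take ↑i).take ↑q))) 1)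

def K3 (a b c : List (BB n m)) : FW n m ⧸ cycRel n m :=
  ∑ i : Fin a.length, ∑ k : Fin c.length, ∑ q : Fin ((c.drop (↑k + 1)).length), ∑ j : Fin b.length,
    (cfL (a.take ↑i) (nth a ↑i) (a.drop (↑i + 1)) (c.take ↑k) (nth c ↑k) (c.drop (↑k + 1)) *
      cfL (b.take ↑j) (nth b ↑j) (b.drop (↑j + 1)) (a.drop (↑i + 1) ++ (a.take ↑i ++ (c.drop (↑k + 1)).take ↑q)) (nth (c.drop (↑k + 1)) ↑q) ((c.drop (↑k + 1)).drop (↑q + 1) ++ c.take ↑k)) •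
      (cycRel n m).mkQ (Finsupp.single (((b.drop (↑j + 1)) ++ (b.take ↑j)) ++ (((c.drop (↑k + 1)).drop (↑q + 1) ++ c.take ↑k) ++ (a.drop (↑i + 1) ++ (a.take ↑i ++ (c.drop (↑k + 1)).take ↑q)))) 1)

def K4 (a b c : List (BB n m)) : FW n m ⧸ cycRel n m :=
  ∑ i : Fin a.length, ∑ k : Fin c.length, ∑ q : Fin ((c.take ↑k).length), ∑ j : Fin b.length,
    (cfL (a.take ↑i) (nth a ↑i) (a.drop (↑i + 1)) (c.take ↑k) (nth c ↑k) (c.drop (↑k + 1)) *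
      cfL (b.take ↑j) (nth b ↑j) (b.drop (↑j + 1)) (a.drop (↑i + 1) ++ (a.take ↑i ++ (c.drop (↑k + 1) ++ (c.take ↑k).take ↑q))) (nth (c.take ↑k) ↑q) ((c.take ↑k).drop (↑q + 1))) •
      (cycRel n m).mkQ (Finsupp.single (((b.drop (↑j + 1)) ++ (b.take ↑j)) ++ (((c.take ↑k).drop (↑q + 1)) ++ (a.drop (↑i + 1) ++ (a.take ↑i ++ (c.drop (↑k + 1) ++ (c.take ↑k).take ↑q))))) 1)

lemma LQ (a b c : List (BB n m)) :
    (cycRel n m).mkQ (bracketF (bracketWord a b) (Finsupp.single c 1))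
      = G1 a b c + (G2 a b c + (G3 a b c + G4 a b c)) := by
  rw [bf_right_sum, map_sum]
  unfold G1 G2 G3 G4
  simp only [← Finset.sum_add_distrib]
  refine Finset.sum_congr rfl fun i _ => ?_
  rw [map_sum]
  refine Finset.sum_congr rfl fun j _ => ?_
  rw [map_smul, List.append_assoc, BW_fst, split4 _ _ _ _ (tmF c)]
  unfold tmF
  simp only [map_add, map_sum, map_smul, smul_add, Finset.smul_sum, smul_smul]

lemma RQ1 (a b c : List (BB n m)) :
    (cycRel n m).mkQ (bracketF (Finsupp.single a 1) (bracketWord b c))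
      = H1 a b c + (H2 a b c + (H3 a b c + H4 a b c)) := by
  rw [bf_left_sum, map_sum]
  unfold H1 H2 H3 H4
  simp only [← Finset.sum_add_distrib]
  refine Finset.sum_congr rfl fun j _ => ?_
  rw [map_sum]
  refine Finset.sum_congr rfl fun k _ => ?_
  rw [map_smul, List.append_assoc, BW_snd a, split4 _ _ _ _ (tmS a)]
  unfold tmS
  simp only [map_add, map_sum, map_smul, smul_add, Finset.smul_sum, smul_smul]

lemma RQ2 (a b c : List (BB n m)) :
    (cycRel n m).mkQ (bracketF (Finsupp.single b 1) (bracketWord a c))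
      = K1 a b c + (K2 a b c + (K3 a b c + K4 a b c)) := by
  rw [bf_left_sum, map_sum]
  unfold K1 K2 K3 K4
  simp only [← Finset.sum_add_distrib]
  refine Finset.sum_congr rfl fun i _ => ?_
  rw [map_sum]
  refine Finset.sum_congr rfl fun k _ => ?_
  rw [map_smul, List.append_assoc, BW_snd b, split4 _ _ _ _ (tmS b)]
  unfold tmS
  simp only [map_add, map_sum, map_smul, smul_add, Finset.smul_sum, smul_smul]

lemma tk_take (ℓ : List (BB n m)) (i p : ℕ) : (ℓ.take (i + 1 + p)).take i = ℓ.take i := by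
  rw [List.take_take]
  congr 1
  omega

lemma tk_nth (ℓ : List (BB n m)) (i p : ℕ) : nth (ℓ.take (i + 1 + p)) i = nth ℓ i := by
  unfold nth
  rw [List.drop_take, List.take_take]
  congr 1
  omega

lemma tk_drop (ℓ : List (BB n m)) (i p : ℕ) :
    (ℓ.take (i + 1 + p)).drop (i + 1) = (ℓ.drop (i + 1)).take p := by
  rw [List.drop_take]
  congr 1
  omega

lemma nth_add (ℓ : List (BB n m)) (i p : ℕ) : nth ℓ (i + 1 + p) = nth (ℓ.drop (i + 1)) p := by
  unfold nth
  rw [List.drop_drop]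

lemma drop_add' (ℓ : List (BB n m)) (i p : ℕ) :
    ℓ.drop (i + 1 + p + 1) = (ℓ.drop (i + 1)).drop (p + 1) := by
  rw [List.drop_drop]
  ring_nf

lemma seg (ℓ : List (BB n m)) (p : ℕ) (h : p < ℓ.length) :
    ℓ = ℓ.take p ++ (nth ℓ p ++ ℓ.drop (p + 1)) := by
  rw [nth_eq h]
  conv_lhs => rw [← List.take_append_drop p ℓ, List.drop_eq_getElem_cons h]
  simp

lemma take_seg (ℓ : List (BB n m)) (i p : ℕ) (h : i < ℓ.length) :
    ℓ.take (i + 1 + p) = ℓ.take i ++ (nth ℓ i ++ (ℓ.drop (i + 1)).take p) := by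
  rw [show i + 1 + p = i + (1 + p) from by ring, List.take_add, nth_eq h,
    List.drop_eq_getElem_cons h, show 1 + p = p + 1 from by ring, List.take_succ_cons]
  rfl

lemma pL_seg (ℓ : List (BB n m)) (p : ℕ) (h : p < ℓ.length) :
    pL ℓ = pL (ℓ.take p) + par (ℓ[p]'h) + pL (ℓ.drop (p + 1)) := by
  conv_lhs => rw [seg ℓ p h]
  rw [nth_eq h]
  simp only [pL_append, pL_single]
  ring

set_option maxRecDepth 10000 in
set_option maxHeartbeats 1000000 in
lemma mG1K2 (a b c : List (BB n m)) : G1 a b c = (-1 : ℂ)^(pL a * pL b + 1) • K2 a b c := by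
  unfold G1 K2
  simp only [Finset.smul_sum, smul_smul]
  refine (Finset.sum_congr rfl fun i _ => Finset.sum_comm).trans
    (Eq.trans ?_ (Finset.sum_congr rfl fun i _ =>
      Finset.sum_comm.trans (Finset.sum_congr rfl fun q _ => Finset.sum_comm)).symm)
  refine tri (M := FW n m ⧸ cycRel n m) a.length (fun t => (a.drop (t+1)).length)
    (fun t => (a.take t).length) (fun t ht => by simp) (fun t ht => by simp; omega)
    (fun t1 t2 => ∑ j : Fin b.length, ∑ k : Fin c.length,
    (cfL (a.take t1) (nth a t1) (a.drop (t1 + 1)) (b.take ↑j) (nth b ↑j) (b.drop (↑j + 1)) * cfL ((a.drop (t1 + 1)).take t2) (nth (a.drop (t1 + 1)) t2) ((a.drop (t1 + 1)).drop (t2 + 1) ++ (a.take t1 ++ (b.drop (↑j + 1) ++ b.take ↑j))) (c.take ↑k) (nth c ↑k) (c.drop (↑k + 1))) • (cycRel n m).mkQ (Finsupp.single ((((a.drop (t1 + 1)).drop (t2 + 1) ++ (a.take t1 ++ (b.drop (↑j + 1) ++ b.take ↑j))) ++ ((a.drop (t1 + 1)).take t2)) ++ (c.drop (↑k + 1) ++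 c.take ↑k)) 1))
    (fun t1 t2 => ∑ j : Fin b.length, ∑ k : Fin c.length,
    ((-1 : ℂ)^(pL a * pL b + 1) * (cfL (a.take t1) (nth a t1) (a.drop (t1 + 1)) (c.take ↑k) (nth c ↑k) (c.drop (↑k + 1)) * cfL (b.take ↑j) (nth b ↑j) (b.drop (↑j + 1)) (a.drop (t1 + 1) ++ (a.take t1).take t2) (nth (a.take t1) t2) ((a.take t1).drop (t2 + 1) ++ (c.drop (↑k + 1) ++ c.take ↑k)))) • (cycRel n m).mkQ (Finsupp.single (((b.drop (↑j + 1)) ++ (b.take ↑j)) ++ (((a.take t1).drop (t2 + 1) ++ (c.drop (↑k + 1) ++ c.take ↑k)) ++ (a.drop (t1 + 1) ++ (a.take t1).take t2))) 1)) ?_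
  intro i p hi hip
  refine Finset.sum_congr rfl fun j _ => Finset.sum_congr rfl fun k _ => ?_
  have hp : p < (a.drop (i+1)).length := by
    rw [List.length_drop]; omega
  rw [pL_seg a i (by omega), pL_seg (a.drop (i+1)) p hp, pL_seg b ↑j j.isLt]
  rw [tk_take a i p, tk_nth a i p, tk_drop a i p, nth_add a i p, drop_add' a i p,
      take_seg a i p (by omega)]
  have hs := seg (a.drop (i+1)) p hp
  rw [nth_eq hp] at hs
  rw [nth_eq (show i < a.length by omega), nth_eq hp, nth_eq j.isLt, nth_eq k.isLt]
  exact M3 _ _ _ _ _ _ _ _ _ _ _ _ hs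

set_option maxRecDepth 10000 in
set_option maxHeartbeats 1000000 in
lemma mK1G2 (a b c : List (BB n m)) : (-1 : ℂ)^(pL a * pL b + 1) • K1 a b c = G2 a b c := by
  unfold K1 G2
  simp only [Finset.smul_sum, smul_smul]
  refine ((Finset.sum_congr rfl fun i _ =>
      Finset.sum_comm.trans (Finset.sum_congr rfl fun q _ => Finset.sum_comm))).trans
    (Eq.trans ?_ (Finset.sum_congr rfl fun i _ => Finset.sum_comm).symm)
  refine tri (M := FW n m ⧸ cycRel n m) a.length (fun t => (a.drop (t+1)).length)
    (fun t => (a.take t).length) (fun t ht => by simp) (fun t ht => by simp; omega)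
    (fun t1 t2 => ∑ j : Fin b.length, ∑ k : Fin c.length,
    ((-1 : ℂ)^(pL a * pL b + 1) * (cfL (a.take t1) (nth a t1) (a.drop (t1 + 1)) (c.take ↑k) (nth c ↑k) (c.drop (↑k + 1)) * cfL (b.take ↑j) (nth b ↑j) (b.drop (↑j + 1)) ((a.drop (t1 + 1)).take t2) (nth (a.drop (t1 + 1)) t2) ((a.drop (t1 + 1)).drop (t2 + 1) ++ (a.take t1 ++ (c.drop (↑k + 1) ++ c.take ↑k))))) • (cycRel n m).mkQ (Finsupp.single (((b.drop (↑j + 1)) ++ (b.take ↑j)) ++ (((a.drop (t1 + 1)).drop (t2 + 1) ++ (a.take t1 ++ (c.drop (↑k + 1) ++ c.take ↑k))) ++ ((a.drop (t1 + 1)).take t2))) 1))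
    (fun t1 t2 => ∑ j : Fin b.length, ∑ k : Fin c.length,
    (cfL (a.take t1) (nth a t1) (a.drop (t1 + 1)) (b.take ↑j) (nth b ↑j) (b.drop (↑j + 1)) * cfL (a.drop (t1 + 1) ++ (a.take t1).take t2) (nth (a.take t1) t2) ((a.take t1).drop (t2 + 1) ++ (b.drop (↑j + 1) ++ b.take ↑j)) (c.take ↑k) (nth c ↑k) (c.drop (↑k + 1))) • (cycRel n m).mkQ (Finsupp.single ((((a.take t1).drop (t2 + 1) ++ (b.drop (↑j + 1) ++ b.take ↑j)) ++ (a.drop (t1 + 1) ++ (a.take t1).take t2)) ++ (c.drop (↑k + 1) ++ c.take ↑k)) 1)) ?_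
  intro i p hi hip
  refine Finset.sum_congr rfl fun j _ => Finset.sum_congr rfl fun k _ => ?_
  have hp : p < (a.drop (i+1)).length := by
    rw [List.length_drop]; omega
  rw [pL_seg a i (by omega), pL_seg (a.drop (i+1)) p hp, pL_seg b ↑j j.isLt]
  rw [tk_take a i p, tk_nth a i p, tk_drop a i p, nth_add a i p, drop_add' a i p,
      take_seg a i p (by omega)]
  have hs := seg (a.drop (i+1)) p hp
  rw [nth_eq hp] at hs
  rw [nth_eq (show i < a.length by omega), nth_eq hp, nth_eq j.isLt, nth_eq k.isLt]
  exact M4 _ _ _ _ _ _ _ _ _ _ _ _ hs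

set_option maxRecDepth 10000 in
set_option maxHeartbeats 1000000 in
lemma mH1G4 (a b c : List (BB n m)) : H1 a b c = G4 a b c := by
  unfold H1 G4
  refine (Finset.sum_congr rfl fun j _ =>
      Finset.sum_comm.trans (Finset.sum_congr rfl fun q _ => Finset.sum_comm)).trans
    (Eq.trans ?_ ((Finset.sum_comm.trans
      (Finset.sum_congr rfl fun j _ => Finset.sum_comm)).symm))
  refine tri (M := FW n m ⧸ cycRel n m) b.length (fun t => (b.drop (t+1)).length)
    (fun t => (b.take t).length) (fun t ht => by simp) (fun t ht => by simp; omega)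
    (fun t1 t2 => ∑ i : Fin a.length, ∑ k : Fin c.length,
    (cfL (b.take t1) (nth b t1) (b.drop (t1 + 1)) (c.take ↑k) (nth c ↑k) (c.drop (↑k + 1)) * cfL (a.take ↑i) (nth a ↑i) (a.drop (↑i + 1)) ((b.drop (t1 + 1)).take t2) (nth (b.drop (t1 + 1)) t2) ((b.drop (t1 + 1)).drop (t2 + 1) ++ (b.take t1 ++ (c.drop (↑k + 1) ++ c.take ↑k)))) • (cycRel n m).mkQ (Finsupp.single (((a.drop (↑i + 1)) ++ (a.take ↑i)) ++ (((b.drop (t1 + 1)).drop (t2 + 1) ++ (b.take t1 ++ (c.drop (↑k + 1) ++ c.take ↑k))) ++ ((b.drop (t1 + 1)).take t2))) 1))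
    (fun t1 t2 => ∑ i : Fin a.length, ∑ k : Fin c.length,
    (cfL (a.take ↑i) (nth a ↑i) (a.drop (↑i + 1)) (b.take t1) (nth b t1) (b.drop (t1 + 1)) * cfL (a.drop (↑i + 1) ++ (a.take ↑i ++ (b.drop (t1 + 1) ++ (b.take t1).take t2))) (nth (b.take t1) t2) ((b.take t1).drop (t2 + 1)) (c.take ↑k) (nth c ↑k) (c.drop (↑k + 1))) • (cycRel n m).mkQ (Finsupp.single ((((b.take t1).drop (t2 + 1)) ++ (a.drop (↑i + 1) ++ (a.take ↑i ++ (b.drop (t1 + 1) ++ (b.take t1).take t2)))) ++ (c.drop (↑k + 1) ++ c.take ↑k)) 1)) ?_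
  intro j p hj hjp
  refine Finset.sum_congr rfl fun i _ => Finset.sum_congr rfl fun k _ => ?_
  have hp : p < (b.drop (j+1)).length := by
    rw [List.length_drop]; omega
  rw [tk_take b j p, tk_nth b j p, tk_drop b j p, nth_add b j p, drop_add' b j p,
      take_seg b j p (by omega)]
  have hs := seg (b.drop (j+1)) p hp
  rw [nth_eq hp] at hs
  rw [nth_eq (show j < b.length by omega), nth_eq hp, nth_eq i.isLt, nth_eq k.isLt]
  exact M2 _ _ _ _ _ _ _ _ _ _ _ _ hs

set_option maxRecDepth 10000 in
set_option maxHeartbeats 1000000 in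
lemma mH3K4 (a b c : List (BB n m)) : H3 a b c = (-1 : ℂ)^(pL a * pL b) • K4 a b c := by
  unfold H3 K4
  simp only [Finset.smul_sum, smul_smul]
  refine (Finset.sum_comm.trans (Finset.sum_congr rfl fun k _ => Finset.sum_comm)).trans
    (Eq.trans ?_ ((Finset.sum_comm.trans (Finset.sum_congr rfl fun k _ =>
      Finset.sum_comm.trans (Finset.sum_congr rfl fun q _ => Finset.sum_comm))).symm))
  refine tri (M := FW n m ⧸ cycRel n m) c.length (fun t => (c.drop (t+1)).length)
    (fun t => (c.take t).length) (fun t ht => by simp) (fun t ht => by simp; omega)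
    (fun t1 t2 => ∑ j : Fin b.length, ∑ i : Fin a.length,
    (cfL (b.take ↑j) (nth b ↑j) (b.drop (↑j + 1)) (c.take t1) (nth c t1) (c.drop (t1 + 1)) * cfL (a.take ↑i) (nth a ↑i) (a.drop (↑i + 1)) (b.drop (↑j + 1) ++ (b.take ↑j ++ (c.drop (t1 + 1)).take t2)) (nth (c.drop (t1 + 1)) t2) ((c.drop (t1 + 1)).drop (t2 + 1) ++ c.take t1)) • (cycRel n m).mkQ (Finsupp.single (((a.drop (↑i + 1)) ++ (a.take ↑i)) ++ (((c.drop (t1 + 1)).drop (t2 + 1) ++ c.take t1) ++ (b.drop (↑j + 1) ++ (b.take ↑j ++ (c.drop (t1 + 1)).take t2)))) 1))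
    (fun t1 t2 => ∑ j : Fin b.length, ∑ i : Fin a.length,
    ((-1 : ℂ)^(pL a * pL b) * (cfL (a.take ↑i) (nth a ↑i) (a.drop (↑i + 1)) (c.take t1) (nth c t1) (c.drop (t1 + 1)) * cfL (b.take ↑j) (nth b ↑j) (b.drop (↑j + 1)) (a.drop (↑i + 1) ++ (a.take ↑i ++ (c.drop (t1 + 1) ++ (c.take t1).take t2))) (nth (c.take t1) t2) ((c.take t1).drop (t2 + 1)))) • (cycRel n m).mkQ (Finsupp.single (((b.drop (↑j + 1)) ++ (b.take ↑j)) ++ (((c.take t1).drop (t2 + 1)) ++ (a.drop (↑i + 1) ++ (a.take ↑i ++ (c.drop (t1 + 1) ++ (c.take t1).take t2))))) 1)) ?_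
  intro k p hk hkp
  refine Finset.sum_congr rfl fun j _ => Finset.sum_congr rfl fun i _ => ?_
  have hp : p < (c.drop (k+1)).length := by
    rw [List.length_drop]; omega
  rw [pL_seg a ↑i i.isLt, pL_seg b ↑j j.isLt]
  rw [tk_take c k p, tk_nth c k p, tk_drop c k p, nth_add c k p, drop_add' c k p,
      take_seg c k p (by omega)]
  have hs := seg (c.drop (k+1)) p hp
  rw [nth_eq hp] at hs
  rw [nth_eq (show k < c.length by omega), nth_eq hp, nth_eq i.isLt, nth_eq j.isLt]
  exact M5 _ _ _ _ _ _ _ _ _ _ _ _ hs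

set_option maxRecDepth 10000 in
set_option maxHeartbeats 1000000 in
lemma mK3H4 (a b c : List (BB n m)) : (-1 : ℂ)^(pL a * pL b) • K3 a b c = H4 a b c := by
  unfold K3 H4
  simp only [Finset.smul_sum, smul_smul]
  refine (Finset.sum_comm.trans (Finset.sum_congr rfl fun k _ =>
      Finset.sum_comm.trans (Finset.sum_congr rfl fun q _ => Finset.sum_comm))).trans
    (Eq.trans ?_ ((Finset.sum_comm.trans
      (Finset.sum_congr rfl fun k _ => Finset.sum_comm)).symm))
  refine tri (M := FW n m ⧸ cycRel n m) c.length (fun t => (c.drop (t+1)).length)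
    (fun t => (c.take t).length) (fun t ht => by simp) (fun t ht => by simp; omega)
    (fun t1 t2 => ∑ j : Fin b.length, ∑ i : Fin a.length,
    ((-1 : ℂ)^(pL a * pL b) * (cfL (a.take ↑i) (nth a ↑i) (a.drop (↑i + 1)) (c.take t1) (nth c t1) (c.drop (t1 + 1)) * cfL (b.take ↑j) (nth b ↑j) (b.drop (↑j + 1)) (a.drop (↑i + 1) ++ (a.take ↑i ++ (c.drop (t1 + 1)).take t2)) (nth (c.drop (t1 + 1)) t2) ((c.drop (t1 + 1)).drop (t2 + 1) ++ c.take t1))) • (cycRel n m).mkQ (Finsupp.single (((b.drop (↑j + 1)) ++ (b.take ↑j)) ++ (((c.drop (t1 + 1)).drop (t2 + 1) ++ c.take t1) ++ (a.drop (↑i + 1) ++ (a.take ↑i ++ (c.drop (t1 + 1)).take t2)))) 1))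
    (fun t1 t2 => ∑ j : Fin b.length, ∑ i : Fin a.length,
    (cfL (b.take ↑j) (nth b ↑j) (b.drop (↑j + 1)) (c.take t1) (nth c t1) (c.drop (t1 + 1)) * cfL (a.take ↑i) (nth a ↑i) (a.drop (↑i + 1)) (b.drop (↑j + 1) ++ (b.take ↑j ++ (c.drop (t1 + 1) ++ (c.take t1).take t2))) (nth (c.take t1) t2) ((c.take t1).drop (t2 + 1))) • (cycRel n m).mkQ (Finsupp.single (((a.drop (↑i + 1)) ++ (a.take ↑i)) ++ (((c.take t1).drop (t2 + 1)) ++ (b.drop (↑j + 1) ++ (b.take ↑j ++ (c.drop (t1 + 1) ++ (c.take t1).take t2))))) 1)) ?_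
  intro k p hk hkp
  refine Finset.sum_congr rfl fun j _ => Finset.sum_congr rfl fun i _ => ?_
  have hp : p < (c.drop (k+1)).length := by
    rw [List.length_drop]; omega
  rw [pL_seg a ↑i i.isLt, pL_seg b ↑j j.isLt]
  rw [tk_take c k p, tk_nth c k p, tk_drop c k p, nth_add c k p, drop_add' c k p,
      take_seg c k p (by omega)]
  have hs := seg (c.drop (k+1)) p hp
  rw [nth_eq hp] at hs
  rw [nth_eq (show k < c.length by omega), nth_eq hp, nth_eq i.isLt, nth_eq j.isLt]
  exact M6 _ _ _ _ _ _ _ _ _ _ _ _ hs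

set_option maxRecDepth 10000 in
set_option maxHeartbeats 1000000 in
lemma mG3H2 (a b c : List (BB n m)) : G3 a b c = H2 a b c := by
  unfold G3 H2
  refine (Finset.sum_comm.trans (Finset.sum_congr rfl fun j _ => Finset.sum_comm)).trans
    (Eq.trans ?_ (Finset.sum_congr rfl fun j _ =>
      Finset.sum_comm.trans (Finset.sum_congr rfl fun q _ => Finset.sum_comm)).symm)
  refine tri (M := FW n m ⧸ cycRel n m) b.length (fun t => (b.drop (t+1)).length)
    (fun t => (b.take t).length) (fun t ht => by simp) (fun t ht => by simp; omega)
    (fun t1 t2 => ∑ i : Fin a.length, ∑ k : Fin c.length,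
    (cfL (a.take ↑i) (nth a ↑i) (a.drop (↑i + 1)) (b.take t1) (nth b t1) (b.drop (t1 + 1)) * cfL (a.drop (↑i + 1) ++ (a.take ↑i ++ (b.drop (t1 + 1)).take t2)) (nth (b.drop (t1 + 1)) t2) ((b.drop (t1 + 1)).drop (t2 + 1) ++ b.take t1) (c.take ↑k) (nth c ↑k) (c.drop (↑k + 1))) • (cycRel n m).mkQ (Finsupp.single ((((b.drop (t1 + 1)).drop (t2 + 1) ++ b.take t1) ++ (a.drop (↑i + 1) ++ (a.take ↑i ++ (b.drop (t1 + 1)).take t2))) ++ (c.drop (↑k + 1) ++ c.take ↑k)) 1))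
    (fun t1 t2 => ∑ i : Fin a.length, ∑ k : Fin c.length,
    (cfL (b.take t1) (nth b t1) (b.drop (t1 + 1)) (c.take ↑k) (nth c ↑k) (c.drop (↑k + 1)) * cfL (a.take ↑i) (nth a ↑i) (a.drop (↑i + 1)) (b.drop (t1 + 1) ++ (b.take t1).take t2) (nth (b.take t1) t2) ((b.take t1).drop (t2 + 1) ++ (c.drop (↑k + 1) ++ c.take ↑k))) • (cycRel n m).mkQ (Finsupp.single (((a.drop (↑i + 1)) ++ (a.take ↑i)) ++ (((b.take t1).drop (t2 + 1) ++ (c.drop (↑k + 1) ++ c.take ↑k)) ++ (b.drop (t1 + 1) ++ (b.take t1).take t2))) 1)) ?_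
  intro j p hj hjp
  refine Finset.sum_congr rfl fun i _ => Finset.sum_congr rfl fun k _ => ?_
  have hp : p < (b.drop (j+1)).length := by
    rw [List.length_drop]; omega
  rw [tk_take b j p, tk_nth b j p, tk_drop b j p, nth_add b j p, drop_add' b j p,
      take_seg b j p (by omega)]
  have hs := seg (b.drop (j+1)) p hp
  rw [nth_eq hp] at hs
  rw [nth_eq (show j < b.length by omega), nth_eq hp, nth_eq i.isLt, nth_eq k.isLt]
  exact M1 _ _ _ _ _ _ _ _ _ _ _ _ hs

end Jac4

/-- The super Jacobi identity for the bracket of noncommutative Hamiltonians. -/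
theorem statement_6 (n m : ℕ) (a b c : List (BB n m)) :
    (cycRel n m).mkQ (bracketF (bracketWord a b) (Finsupp.single c 1))
      = (cycRel n m).mkQ (bracketF (Finsupp.single a 1) (bracketWord b c))
        - ((-1 : ℂ) ^ (pL a * pL b)) •
            (cycRel n m).mkQ (bracketF (Finsupp.single b 1) (bracketWord a c)) := by
  rw [Jac4.LQ, Jac4.RQ1, Jac4.RQ2]
  rw [Jac4.mG3H2, Jac4.mG1K2, ← Jac4.mK1G2, Jac4.mH1G4, Jac4.mH3K4, ← Jac4.mK3H4]
  rw [pow_succ]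
  module

end
end
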